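/- arXiv:1208.3862 — 3 statements merged into one kernel-verified Lean document; each statement's English description precedes it below -/
import Mathlib

section
/- There exists a constant C, depending only on c_φ, C_φ, τ, M and ∫x²φ(x)dx, such that for every n ≥ 1, every σ > 0 and every θ₀ ∈ ℝ with |θ₀| ≤ Mσ, the expectation over ε ~ N(0,1) of the posterior second moment satisfies E[B_{n,σ,θ₀}(ε)] ≤ C·min(σ², 1/n). -/
open MeasureTheory ProbabilityTheory

/-- Denominator integral `D_{n,σ,θ₀}(ε)`. -/
noncomputable def Dint (φ : ℝ → ℝ) (n : ℕ) (σ θ₀ ε : ℝ) : ℝ :=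
  ∫ v : ℝ, Real.exp (-v ^ 2 / 2 + ε * v) *
    ((Real.sqrt n * σ)⁻¹ * φ ((θ₀ + v / Real.sqrt n) / σ))

/-- Numerator integral `N_{n,σ,θ₀}(ε)`. -/
noncomputable def Nint (φ : ℝ → ℝ) (n : ℕ) (σ θ₀ ε : ℝ) : ℝ :=
  ∫ v : ℝ, v ^ 2 * Real.exp (-v ^ 2 / 2 + ε * v) *
    ((Real.sqrt n * σ)⁻¹ * φ ((θ₀ + v / Real.sqrt n) / σ))

/-- Posterior second moment `B_{n,σ,θ₀}(ε) = N/(n·D)`. -/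
noncomputable def Bpost (φ : ℝ → ℝ) (n : ℕ) (σ θ₀ ε : ℝ) : ℝ :=
  Nint φ n σ θ₀ ε / (n * Dint φ n σ θ₀ ε)

/-!
Substituting `v = √n (θ - θ₀)` turns `B` into `1 / n` times the posterior second moment of `v`
in the model `ε ∣ v ~ N(v, 1)` under a prior density `g` at scale `s = √n σ`: `g ≤ C_φ / s`
everywhere, `g ≥ c_φ / s` on `(-s, s)`, and `∫ v² g = O(s²)`. Numerator and denominator are the
convolutions of `v² g` and `g` with `e^{-u²/2}`, and the denominator is bounded below by
integrating over a subinterval of `(-s, s)` close to `ε`.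

If `s ≤ 1` this gives `D(ε) ≳ e^{-ε²/2}`, which cancels the Gaussian weight of `ε`, so by Fubini
`E B ≲ ∫ v² g / n = O(σ²)`. If `s ≥ 1`, a unit interval next to `ε` gives `B(ε) ≲ (1 + ε²) / n`
for `|ε| ≤ s`, while for `|ε| ≥ s` the unit interval at the edge of `(-s, s)` gives
`D(ε) ≳ e^{(s² - 1)/2} e^{-ε²/2} / s`, so that region contributes `O(s³ e^{-s²/2} / n) = O(1 / n)`.
-/

open Real Set
open scoped Convolution

noncomputable def gaussKernel (u : ℝ) : ℝ := exp (-u ^ 2 / 2)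

lemma gaussKernel_pos (u : ℝ) : 0 < gaussKernel u := exp_pos _

@[fun_prop]
lemma measurable_gaussKernel : Measurable gaussKernel := by
  unfold gaussKernel; fun_prop

lemma gaussKernel_eq_exp_neg_mul_sq (u : ℝ) : gaussKernel u = exp (-(1 / 2) * u ^ 2) := by
  rw [gaussKernel]; ring_nf

lemma integrable_gaussKernel : Integrable gaussKernel := by
  simpa only [← gaussKernel_eq_exp_neg_mul_sq] using
    integrable_exp_neg_mul_sq (by norm_num : (0 : ℝ) < 1 / 2)

lemma integral_gaussKernel : ∫ u, gaussKernel u = √(2 * π) := by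
  simp_rw [gaussKernel_eq_exp_neg_mul_sq, integral_gaussian]
  congr 1
  field_simp

lemma integrable_sq_mul_gaussKernel : Integrable fun u => u ^ 2 * gaussKernel u := by
  have h := integrable_rpow_mul_exp_neg_mul_sq (by norm_num : (0 : ℝ) < 1 / 2) (s := 2)
    (by norm_num)
  simpa only [rpow_two, gaussKernel_eq_exp_neg_mul_sq] using h

lemma gaussianPDFReal_zero_one (ε : ℝ) :
    gaussianPDFReal 0 1 ε = (√(2 * π))⁻¹ * gaussKernel ε := by
  simp [gaussianPDFReal, gaussKernel]

lemma integral_gaussianReal_zero_one (f : ℝ → ℝ) :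
    ∫ ε, f ε ∂gaussianReal 0 1 = (√(2 * π))⁻¹ * ∫ ε, gaussKernel ε * f ε := by
  rw [integral_gaussianReal_eq_integral_smul one_ne_zero, ← integral_const_mul]
  simp only [gaussianPDFReal_zero_one, smul_eq_mul, mul_assoc]

lemma integral_sq_mul_gaussKernel : ∫ u, u ^ 2 * gaussKernel u = √(2 * π) := by
  have h := variance_fun_id_gaussianReal (μ := 0) (v := 1)
  rw [variance_eq_integral measurable_id'.aemeasurable, integral_gaussianReal_zero_one] at h
  simp only [integral_id_gaussianReal, sub_zero, NNReal.coe_one] at h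
  have : 0 < √(2 * π) := by positivity
  simp_rw [mul_comm (gaussKernel _)] at h
  field_simp at h
  exact h

lemma sq_mul_gaussKernel_sub_le (ε t : ℝ) :
    t ^ 2 * gaussKernel (ε - t) ≤
      2 * ((ε - t) ^ 2 * gaussKernel (ε - t)) + 2 * ε ^ 2 * gaussKernel (ε - t) := by
  have := gaussKernel_pos (ε - t)
  nlinarith [sq_nonneg (2 * ε - t)]

lemma integrable_sq_mul_gaussKernel_sub (ε : ℝ) :
    Integrable fun t => t ^ 2 * gaussKernel (ε - t) := by
  refine (((integrable_sq_mul_gaussKernel.comp_sub_left ε).const_mul 2).add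
    ((integrable_gaussKernel.comp_sub_left ε).const_mul (2 * ε ^ 2))).mono' (by fun_prop) ?_
  refine ae_of_all _ fun t => ?_
  rw [norm_of_nonneg (mul_nonneg (sq_nonneg t) (gaussKernel_pos _).le)]
  exact sq_mul_gaussKernel_sub_le ε t

lemma integral_sq_mul_gaussKernel_sub_le (ε : ℝ) :
    ∫ t, t ^ 2 * gaussKernel (ε - t) ≤ 2 * √(2 * π) * (1 + ε ^ 2) := by
  have h₁ := (integrable_sq_mul_gaussKernel.comp_sub_left ε).const_mul 2
  have h₂ := (integrable_gaussKernel.comp_sub_left ε).const_mul (2 * ε ^ 2)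
  calc ∫ t, t ^ 2 * gaussKernel (ε - t)
      ≤ ∫ t, 2 * ((ε - t) ^ 2 * gaussKernel (ε - t)) + 2 * ε ^ 2 * gaussKernel (ε - t) :=
        integral_mono (integrable_sq_mul_gaussKernel_sub ε) (h₁.add h₂)
          (sq_mul_gaussKernel_sub_le ε)
    _ = 2 * √(2 * π) * (1 + ε ^ 2) := by
        rw [integral_add h₁ h₂, integral_const_mul, integral_const_mul,
          integral_sub_left_eq_self (fun u => u ^ 2 * gaussKernel u),
          integral_sub_left_eq_self gaussKernel, integral_sq_mul_gaussKernel, integral_gaussKernel]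
        ring

lemma convolution_gaussKernel_apply (f : ℝ → ℝ) (ε : ℝ) :
    (f ⋆ gaussKernel) ε = ∫ t, f t * gaussKernel (ε - t) := rfl

lemma integral_convolution_gaussKernel {f : ℝ → ℝ} (hf : Integrable f) :
    ∫ ε, (f ⋆ gaussKernel) ε = √(2 * π) * ∫ t, f t := by
  rw [integral_convolution _ hf integrable_gaussKernel, integral_gaussKernel]
  simp [mul_comm]

lemma exp_neg_sq_add_mul (ε v : ℝ) :
    exp (-v ^ 2 / 2 + ε * v) = exp (ε ^ 2 / 2) * gaussKernel (ε - v) := by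
  rw [gaussKernel, ← exp_add]
  ring_nf

lemma exp_neg_one_half : exp (-1 / 2) = (exp (1 / 2))⁻¹ := by
  rw [neg_div, exp_neg]

lemma mul_div_le_div_of_mul_le {k N D w : ℝ} (hk : 0 < k) (hw : 0 < w) (hN : 0 ≤ N)
    (h : w * k ≤ D) : k * (N / D) ≤ N / w := by
  calc k * (N / D) ≤ k * (N / (w * k)) := by gcongr
    _ = N / w := by field_simp

lemma pow_three_le_eight_mul_exp {s : ℝ} (hs : 1 ≤ s) : s ^ 3 ≤ 8 * exp (s ^ 2 / 2) := by
  have h := pow_div_factorial_le_exp (s ^ 2 / 2) (by positivity) 2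
  have h34 : s ^ 3 ≤ s ^ 4 := pow_le_pow_right₀ hs (by norm_num)
  rw [Nat.factorial_two, Nat.cast_ofNat] at h
  nlinarith

-- The posterior mean of `v²` when `v` has prior density `g` and `ε ∣ v ~ N(v, 1)`.
noncomputable def postSecondMoment (g : ℝ → ℝ) (ε : ℝ) : ℝ :=
  ((fun v => v ^ 2 * g v) ⋆ gaussKernel) ε / (g ⋆ gaussKernel) ε

structure DensityBoundsAtScale (g : ℝ → ℝ) (s a b : ℝ) : Prop where
  measurable : Measurable g
  nonneg : ∀ v, 0 ≤ g v
  le : ∀ v, g v ≤ b / s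
  ge : ∀ v ∈ Ioo (-s) s, a / s ≤ g v

namespace DensityBoundsAtScale

variable {g : ℝ → ℝ} {s a b : ℝ}

lemma integrable_mul (hg : DensityBoundsAtScale g s a b) {k : ℝ → ℝ}
    (hk : Integrable k) : Integrable fun t => g t * k t :=
  hk.bdd_mul hg.measurable.aestronglyMeasurable
    (ae_of_all _ fun t => (norm_of_nonneg (hg.nonneg t)).trans_le (hg.le t))

lemma le_convolution_of_Ioo (hg : DensityBoundsAtScale g s a b) {l r R ε : ℝ} (hlr : l ≤ r)
    (hsub : Ioo l r ⊆ Ioo (-s) s) (hR : ∀ t ∈ Ioo l r, (ε - t) ^ 2 ≤ R) :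
    (r - l) * (a / s * exp (-R / 2)) ≤ (g ⋆ gaussKernel) ε := by
  have hint := hg.integrable_mul (integrable_gaussKernel.comp_sub_left ε)
  calc (r - l) * (a / s * exp (-R / 2)) = ∫ _ in Ioo l r, a / s * exp (-R / 2) := by
        rw [setIntegral_const, Real.volume_real_Ioo_of_le hlr, smul_eq_mul]
    _ ≤ ∫ t in Ioo l r, g t * gaussKernel (ε - t) := by
        refine setIntegral_mono_on (integrableOn_const measure_Ioo_lt_top.ne) hint.integrableOn
          measurableSet_Ioo fun t ht => mul_le_mul (hg.ge t (hsub ht)) ?_ (exp_pos _).le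
            (hg.nonneg t)
        rw [gaussKernel, exp_le_exp]
        linarith [hR t ht]
    _ ≤ (g ⋆ gaussKernel) ε :=
        setIntegral_le_integral hint
          (ae_of_all _ fun t => mul_nonneg (hg.nonneg t) (gaussKernel_pos _).le)

lemma le_convolution_of_le_one (hg : DensityBoundsAtScale g s a b) (hs : 0 < s) (hs1 : s ≤ 1)
    (ε : ℝ) : a * exp (-1 / 2) * gaussKernel ε ≤ (g ⋆ gaussKernel) ε := by
  have hexp : a * exp (-1 / 2) * gaussKernel ε = s * (a / s * exp (-(1 + ε ^ 2) / 2)) := by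
    rw [gaussKernel, ← mul_assoc, mul_assoc, ← exp_add]
    field_simp
    ring_nf
  rw [hexp]
  rcases le_total 0 ε with hε | hε
  · have h := hg.le_convolution_of_Ioo (l := 0) (R := 1 + ε ^ 2) (ε := ε) hs.le
      (Ioo_subset_Ioo (by linarith) le_rfl) fun t ht => by nlinarith [ht.1, ht.2]
    rwa [sub_zero] at h
  · have h := hg.le_convolution_of_Ioo (l := -s) (r := 0) (R := 1 + ε ^ 2) (ε := ε)
      (by linarith) (Ioo_subset_Ioo le_rfl hs.le) fun t ht => by nlinarith [ht.1, ht.2]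
    rwa [zero_sub, neg_neg] at h

lemma le_convolution_of_abs_le (hg : DensityBoundsAtScale g s a b) (hs1 : 1 ≤ s) {ε : ℝ}
    (hε : |ε| ≤ s) : a / s * exp (-1 / 2) ≤ (g ⋆ gaussKernel) ε := by
  obtain ⟨hε₁, hε₂⟩ := abs_le.1 hε
  rcases le_total 0 ε with h0 | h0
  · have h := hg.le_convolution_of_Ioo (l := ε - 1) (r := ε) (R := 1) (ε := ε) (by linarith)
      (Ioo_subset_Ioo (by linarith) hε₂) fun t ht => by nlinarith [ht.1, ht.2]
    rwa [sub_sub_cancel, one_mul] at h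
  · have h := hg.le_convolution_of_Ioo (l := ε) (r := ε + 1) (R := 1) (ε := ε) (by linarith)
      (Ioo_subset_Ioo hε₁ (by linarith)) fun t ht => by nlinarith [ht.1, ht.2]
    rwa [add_sub_cancel_left, one_mul] at h

lemma le_convolution_of_le_abs (hg : DensityBoundsAtScale g s a b) (ha : 0 ≤ a) (hs1 : 1 ≤ s)
    {ε : ℝ} (hε : s ≤ |ε|) :
    a / s * exp ((s ^ 2 - 1) / 2) * gaussKernel ε ≤ (g ⋆ gaussKernel) ε := by
  have hs : 0 < s := by linarith
  have hexp : exp ((s ^ 2 - 1) / 2) * gaussKernel ε ≤ exp (-(|ε| - s + 1) ^ 2 / 2) := by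
    rw [gaussKernel, ← exp_add, exp_le_exp]
    -- `ε² - (|ε| - s + 1)² - (s² - 1) = 2 (s - 1) (|ε| - s)`
    nlinarith [sq_abs ε, mul_nonneg (sub_nonneg.2 hs1) (sub_nonneg.2 hε)]
  have hIoo : a / s * exp (-(|ε| - s + 1) ^ 2 / 2) ≤ (g ⋆ gaussKernel) ε := by
    rcases le_total 0 ε with h0 | h0
    · rw [abs_of_nonneg h0] at hε ⊢
      have h := hg.le_convolution_of_Ioo (l := s - 1) (r := s) (R := (ε - s + 1) ^ 2) (ε := ε)
        (by linarith) (Ioo_subset_Ioo (by linarith) le_rfl) fun t ht => by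
          nlinarith [mul_pos (sub_pos.2 ht.1) (by linarith [ht.2] : 0 < 2 * ε - s + 1 - t)]
      rwa [sub_sub_cancel, one_mul] at h
    · rw [abs_of_nonpos h0] at hε ⊢
      have h := hg.le_convolution_of_Ioo (l := -s) (r := -s + 1) (R := (-ε - s + 1) ^ 2)
        (ε := ε) (by linarith) (Ioo_subset_Ioo le_rfl (by linarith)) fun t ht => by
          nlinarith [mul_pos (sub_pos.2 ht.2) (by linarith [ht.1] : 0 < 1 - s + t - 2 * ε)]
      rwa [add_sub_cancel_left, one_mul] at h
  calc a / s * exp ((s ^ 2 - 1) / 2) * gaussKernel ε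
      = a / s * (exp ((s ^ 2 - 1) / 2) * gaussKernel ε) := mul_assoc _ _ _
    _ ≤ a / s * exp (-(|ε| - s + 1) ^ 2 / 2) := by gcongr
    _ ≤ (g ⋆ gaussKernel) ε := hIoo

lemma convolution_sq_mul_le (hg : DensityBoundsAtScale g s a b) (ε : ℝ) :
    ((fun v => v ^ 2 * g v) ⋆ gaussKernel) ε ≤ b / s * (2 * √(2 * π) * (1 + ε ^ 2)) := by
  have hint := hg.integrable_mul (integrable_sq_mul_gaussKernel_sub ε)
  calc ((fun v => v ^ 2 * g v) ⋆ gaussKernel) ε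
      = ∫ t, g t * (t ^ 2 * gaussKernel (ε - t)) := by
        rw [convolution_gaussKernel_apply]; congr 1; ext t; ring
    _ ≤ ∫ t, b / s * (t ^ 2 * gaussKernel (ε - t)) :=
        integral_mono hint ((integrable_sq_mul_gaussKernel_sub ε).const_mul _) fun t =>
          mul_le_mul_of_nonneg_right (hg.le t) (mul_nonneg (sq_nonneg t) (gaussKernel_pos _).le)
    _ ≤ b / s * (2 * √(2 * π) * (1 + ε ^ 2)) := by
        rw [integral_const_mul]
        exact mul_le_mul_of_nonneg_left (integral_sq_mul_gaussKernel_sub_le ε)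
          ((hg.nonneg 0).trans (hg.le 0))

lemma upper_nonneg (hg : DensityBoundsAtScale g s a b) (hs : 0 < s) : 0 ≤ b := by
  have h := (hg.nonneg 0).trans (hg.le 0)
  rwa [le_div_iff₀ hs, zero_mul] at h

lemma convolution_sq_mul_nonneg (hg : DensityBoundsAtScale g s a b) (ε : ℝ) :
    0 ≤ ((fun v => v ^ 2 * g v) ⋆ gaussKernel) ε :=
  integral_nonneg fun t =>
    mul_nonneg (mul_nonneg (sq_nonneg t) (hg.nonneg t)) (gaussKernel_pos _).le

lemma postSecondMoment_nonneg (hg : DensityBoundsAtScale g s a b) (ε : ℝ) :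
    0 ≤ postSecondMoment g ε :=
  div_nonneg (hg.convolution_sq_mul_nonneg ε)
    (integral_nonneg fun t => mul_nonneg (hg.nonneg t) (gaussKernel_pos _).le)

lemma gaussKernel_mul_postSecondMoment_le (hg : DensityBoundsAtScale g s a b) {w ε : ℝ}
    (hw : 0 < w) (hD : w * gaussKernel ε ≤ (g ⋆ gaussKernel) ε) :
    gaussKernel ε * postSecondMoment g ε ≤ ((fun v => v ^ 2 * g v) ⋆ gaussKernel) ε / w :=
  mul_div_le_div_of_mul_le (gaussKernel_pos ε) hw (hg.convolution_sq_mul_nonneg ε) hD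

lemma postSecondMoment_le_of_abs_le (hg : DensityBoundsAtScale g s a b) (ha : 0 < a)
    (hs1 : 1 ≤ s) {ε : ℝ} (hε : |ε| ≤ s) :
    postSecondMoment g ε ≤ 2 * √(2 * π) * exp (1 / 2) * b / a * (1 + ε ^ 2) := by
  have hs : 0 < s := by linarith
  calc postSecondMoment g ε ≤ b / s * (2 * √(2 * π) * (1 + ε ^ 2)) / (a / s * exp (-1 / 2)) :=
        div_le_div₀ ((hg.convolution_sq_mul_nonneg ε).trans (hg.convolution_sq_mul_le ε))
          (hg.convolution_sq_mul_le ε) (by positivity) (hg.le_convolution_of_abs_le hs1 hε)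
    _ = 2 * √(2 * π) * exp (1 / 2) * b / a * (1 + ε ^ 2) := by
        rw [exp_neg_one_half]
        field_simp

theorem integral_postSecondMoment_le_of_le_one (hg : DensityBoundsAtScale g s a b) (ha : 0 < a)
    (hs : 0 < s) (hs1 : s ≤ 1) (hmom : Integrable fun v => v ^ 2 * g v) :
    ∫ ε, postSecondMoment g ε ∂gaussianReal 0 1 ≤ exp (1 / 2) / a * ∫ v, v ^ 2 * g v := by
  have hw : 0 < a * exp (-1 / 2) := by positivity
  rw [integral_gaussianReal_zero_one]
  calc (√(2 * π))⁻¹ * ∫ ε, gaussKernel ε * postSecondMoment g ε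
      ≤ (√(2 * π))⁻¹ *
          ∫ ε, ((fun v => v ^ 2 * g v) ⋆ gaussKernel) ε / (a * exp (-1 / 2)) := by
        refine mul_le_mul_of_nonneg_left (integral_mono_of_nonneg
          (ae_of_all _ fun ε => mul_nonneg (gaussKernel_pos ε).le (hg.postSecondMoment_nonneg ε))
          ((hmom.integrable_convolution _ integrable_gaussKernel).div_const _)
          (ae_of_all _ fun ε => hg.gaussKernel_mul_postSecondMoment_le hw
            (hg.le_convolution_of_le_one hs hs1 ε))) (by positivity)
    _ = exp (1 / 2) / a * ∫ v, v ^ 2 * g v := by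
        rw [integral_div, integral_convolution_gaussKernel hmom, exp_neg_one_half]
        field_simp

theorem integral_postSecondMoment_le_of_one_le (hg : DensityBoundsAtScale g s a b) (ha : 0 < a)
    (hs1 : 1 ≤ s) (hmom : Integrable fun v => v ^ 2 * g v) :
    ∫ ε, postSecondMoment g ε ∂gaussianReal 0 1 ≤
      4 * √(2 * π) * exp (1 / 2) * b / a +
        s / (a * exp ((s ^ 2 - 1) / 2)) * ∫ v, v ^ 2 * g v := by
  have hs : 0 < s := by linarith
  set c := 2 * √(2 * π) * exp (1 / 2) * b / a
  set w := a / s * exp ((s ^ 2 - 1) / 2)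
  have hc : 0 ≤ c := by
    have := hg.upper_nonneg hs
    positivity
  have hw : 0 < w := by positivity
  have hN := hmom.integrable_convolution (ContinuousLinearMap.lsmul ℝ ℝ) integrable_gaussKernel
  have hinner : Integrable fun ε => c * (gaussKernel ε + ε ^ 2 * gaussKernel ε) :=
    (integrable_gaussKernel.add integrable_sq_mul_gaussKernel).const_mul c
  have hbound : ∀ ε, gaussKernel ε * postSecondMoment g ε ≤
      c * (gaussKernel ε + ε ^ 2 * gaussKernel ε) +
        ((fun v => v ^ 2 * g v) ⋆ gaussKernel) ε / w := by
    intro ε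
    rcases le_total |ε| s with hε | hε
    · calc gaussKernel ε * postSecondMoment g ε ≤ gaussKernel ε * (c * (1 + ε ^ 2)) :=
            mul_le_mul_of_nonneg_left (hg.postSecondMoment_le_of_abs_le ha hs1 hε)
              (gaussKernel_pos ε).le
        _ = c * (gaussKernel ε + ε ^ 2 * gaussKernel ε) := by ring
        _ ≤ _ := le_add_of_nonneg_right (div_nonneg (hg.convolution_sq_mul_nonneg ε) hw.le)
    · refine (hg.gaussKernel_mul_postSecondMoment_le hw
        (hg.le_convolution_of_le_abs ha.le hs1 hε)).trans
        (le_add_of_nonneg_left (mul_nonneg hc (by positivity [gaussKernel_pos ε])))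
  rw [integral_gaussianReal_zero_one]
  calc (√(2 * π))⁻¹ * ∫ ε, gaussKernel ε * postSecondMoment g ε
      ≤ (√(2 * π))⁻¹ * ∫ ε, c * (gaussKernel ε + ε ^ 2 * gaussKernel ε) +
          ((fun v => v ^ 2 * g v) ⋆ gaussKernel) ε / w :=
        mul_le_mul_of_nonneg_left (integral_mono_of_nonneg
          (ae_of_all _ fun ε => mul_nonneg (gaussKernel_pos ε).le (hg.postSecondMoment_nonneg ε))
          (hinner.add (hN.div_const w)) (ae_of_all _ hbound)) (by positivity)
    _ = 4 * √(2 * π) * exp (1 / 2) * b / a +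
          s / (a * exp ((s ^ 2 - 1) / 2)) * ∫ v, v ^ 2 * g v := by
        rw [integral_add hinner (hN.div_const w), integral_const_mul,
          integral_add integrable_gaussKernel integrable_sq_mul_gaussKernel, integral_gaussKernel,
          integral_sq_mul_gaussKernel, integral_div, integral_convolution_gaussKernel hmom]
        simp only [c, w]
        field_simp
        ring

theorem integral_postSecondMoment_le_min {K : ℝ} (hg : DensityBoundsAtScale g s a b)
    (ha : 0 < a) (hs : 0 < s) (hmom : Integrable fun v => v ^ 2 * g v)
    (hK : ∫ v, v ^ 2 * g v ≤ K * s ^ 2) :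
    ∫ ε, postSecondMoment g ε ∂gaussianReal 0 1 ≤
      exp (1 / 2) * (4 * √(2 * π) * b + 9 * K) / a * min (s ^ 2) 1 := by
  have hb := hg.upper_nonneg hs
  have hK₀ : 0 ≤ K := by
    have : 0 ≤ K * s ^ 2 :=
      (integral_nonneg fun v => mul_nonneg (sq_nonneg v) (hg.nonneg v)).trans hK
    exact nonneg_of_mul_nonneg_left this (by positivity)
  rcases le_total s 1 with hs1 | hs1
  · rw [min_eq_left (by nlinarith)]
    calc ∫ ε, postSecondMoment g ε ∂gaussianReal 0 1 ≤ exp (1 / 2) / a * (K * s ^ 2) :=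
          (hg.integral_postSecondMoment_le_of_le_one ha hs hs1 hmom).trans (by gcongr)
      _ = exp (1 / 2) * K / a * s ^ 2 := by ring
      _ ≤ exp (1 / 2) * (4 * √(2 * π) * b + 9 * K) / a * s ^ 2 := by
          gcongr exp (1 / 2) * ?_ / a * s ^ 2
          nlinarith [sqrt_nonneg (2 * π)]
  · rw [min_eq_right (by nlinarith)]
    have hE := exp_pos ((s ^ 2 - 1) / 2)
    have h8 : s ^ 3 ≤ 8 * exp (1 / 2) * exp ((s ^ 2 - 1) / 2) := by
      rw [mul_assoc, ← exp_add]
      convert pow_three_le_eight_mul_exp hs1 using 3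
      ring
    calc ∫ ε, postSecondMoment g ε ∂gaussianReal 0 1
        ≤ 4 * √(2 * π) * exp (1 / 2) * b / a + s / (a * exp ((s ^ 2 - 1) / 2)) * (K * s ^ 2) :=
          (hg.integral_postSecondMoment_le_of_one_le ha hs1 hmom).trans (by gcongr)
      _ = 4 * √(2 * π) * exp (1 / 2) * b / a + K * s ^ 3 / (a * exp ((s ^ 2 - 1) / 2)) := by
          ring
      _ ≤ 4 * √(2 * π) * exp (1 / 2) * b / a +
            K * (8 * exp (1 / 2) * exp ((s ^ 2 - 1) / 2)) / (a * exp ((s ^ 2 - 1) / 2)) := by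
          gcongr
      _ ≤ exp (1 / 2) * (4 * √(2 * π) * b + 9 * K) / a * 1 := by
          field_simp
          nlinarith [exp_pos (1 / 2)]

end DensityBoundsAtScale

section CenteredMoment

variable {φ : ℝ → ℝ}

lemma sub_sq_mul_le (hφ_nonneg : ∀ x, 0 ≤ φ x) (c x : ℝ) :
    (x - c) ^ 2 * φ x ≤ 2 * (x ^ 2 * φ x) + 2 * c ^ 2 * φ x := by
  nlinarith [mul_nonneg (sq_nonneg (x + c)) (hφ_nonneg x)]

lemma integrable_sub_sq_mul (hφ : Measurable φ) (hφ_nonneg : ∀ x, 0 ≤ φ x)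
    (hint : Integrable φ) (hmom : Integrable fun x => x ^ 2 * φ x) (c : ℝ) :
    Integrable fun x => (x - c) ^ 2 * φ x :=
  ((hmom.const_mul 2).add (hint.const_mul (2 * c ^ 2))).mono' (by fun_prop)
    (ae_of_all _ fun x => by
      rw [norm_of_nonneg (mul_nonneg (sq_nonneg _) (hφ_nonneg x))]
      exact sub_sq_mul_le hφ_nonneg c x)

lemma integral_sub_sq_mul_le (hφ : Measurable φ) (hφ_nonneg : ∀ x, 0 ≤ φ x)
    (hint : Integrable φ) (hmom : Integrable fun x => x ^ 2 * φ x) (c : ℝ) :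
    ∫ x, (x - c) ^ 2 * φ x ≤ 2 * (∫ x, x ^ 2 * φ x) + 2 * c ^ 2 * ∫ x, φ x := by
  rw [← integral_const_mul, ← integral_const_mul,
    ← integral_add (hmom.const_mul 2) (hint.const_mul _)]
  exact integral_mono (integrable_sub_sq_mul hφ hφ_nonneg hint hmom c)
    ((hmom.const_mul 2).add (hint.const_mul _)) (sub_sq_mul_le hφ_nonneg c)

end CenteredMoment

-- The density of `s (X - c)` for `X` with density `φ`; with `s = √n σ` and `c = θ₀ / σ` it is
-- the prior density of `√n (θ - θ₀)`.
noncomputable def rescale (φ : ℝ → ℝ) (s c v : ℝ) : ℝ := s⁻¹ * φ (v / s + c)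

section Rescale

variable {φ : ℝ → ℝ} {s c : ℝ}

lemma densityBoundsAtScale_rescale {cφ Cφ τ : ℝ} (hφ : Measurable φ)
    (hφ_nonneg : ∀ x, 0 ≤ φ x) (hub : ∀ x, φ x ≤ Cφ) (hlb : ∀ x ∈ Ioo (-τ) τ, cφ ≤ φ x)
    (hs : 0 < s) (hc : |c| + 1 ≤ τ) :
    DensityBoundsAtScale (rescale φ s c) s cφ Cφ where
  measurable := by unfold rescale; fun_prop
  nonneg v := mul_nonneg (inv_nonneg.2 hs.le) (hφ_nonneg _)
  le v := by
    rw [rescale, div_eq_inv_mul Cφ]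
    exact mul_le_mul_of_nonneg_left (hub _) (inv_nonneg.2 hs.le)
  ge v hv := by
    rw [rescale, div_eq_inv_mul cφ]
    refine mul_le_mul_of_nonneg_left (hlb _ ?_) (inv_nonneg.2 hs.le)
    have hv' : |v / s| < 1 := by
      rw [abs_div, abs_of_pos hs, div_lt_one hs]
      exact abs_lt.2 hv
    rw [mem_Ioo, ← abs_lt]
    linarith [abs_add_le (v / s) c]

lemma sq_mul_rescale (hs : 0 < s) (v : ℝ) :
    v ^ 2 * rescale φ s c v = s * (fun y => (y + c - c) ^ 2 * φ (y + c)) (v / s) := by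
  rw [rescale]
  field_simp
  ring

lemma integrable_sq_mul_rescale (hs : 0 < s) (hφ : Integrable fun x => (x - c) ^ 2 * φ x) :
    Integrable fun v => v ^ 2 * rescale φ s c v := by
  simp_rw [sq_mul_rescale hs]
  exact ((hφ.comp_add_right c).comp_div hs.ne').const_mul s

lemma integral_sq_mul_rescale (hs : 0 < s) :
    ∫ v, v ^ 2 * rescale φ s c v = s ^ 2 * ∫ x, (x - c) ^ 2 * φ x := by
  simp_rw [sq_mul_rescale hs]
  rw [integral_const_mul, Measure.integral_comp_div (fun y => (y + c - c) ^ 2 * φ (y + c)),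
    integral_add_right_eq_self (fun x => (x - c) ^ 2 * φ x), abs_of_pos hs, smul_eq_mul]
  ring

lemma integral_sq_mul_rescale_le (hφ : Measurable φ) (hφ_nonneg : ∀ x, 0 ≤ φ x)
    (hφ_prob : ∫ x, φ x = 1) (hmom : Integrable fun x => x ^ 2 * φ x) (hs : 0 < s) {M : ℝ}
    (hc : |c| ≤ M) :
    ∫ v, v ^ 2 * rescale φ s c v ≤ 2 * ((∫ x, x ^ 2 * φ x) + M ^ 2) * s ^ 2 := by
  have hint : Integrable φ := .of_integral_ne_zero (by rw [hφ_prob]; exact one_ne_zero)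
  have hcM : c ^ 2 ≤ M ^ 2 := by nlinarith [sq_abs c, abs_nonneg c]
  rw [integral_sq_mul_rescale hs, mul_comm _ (s ^ 2)]
  refine mul_le_mul_of_nonneg_left ?_ (sq_nonneg s)
  have h := integral_sub_sq_mul_le hφ hφ_nonneg hint hmom c
  rw [hφ_prob] at h
  linarith

end Rescale

lemma Bpost_eq (φ : ℝ → ℝ) (n : ℕ) (σ θ₀ ε : ℝ) :
    Bpost φ n σ θ₀ ε = postSecondMoment (rescale φ (√n * σ) (θ₀ / σ)) ε / n := by
  have hprior : ∀ v, (√n * σ)⁻¹ * φ ((θ₀ + v / √n) / σ) = rescale φ (√n * σ) (θ₀ / σ) v := by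
    intro v
    rw [rescale, add_div, div_div, add_comm]
  have hD : Dint φ n σ θ₀ ε =
      exp (ε ^ 2 / 2) * (rescale φ (√n * σ) (θ₀ / σ) ⋆ gaussKernel) ε := by
    rw [Dint, convolution_gaussKernel_apply, ← integral_const_mul]
    congr 1 with v
    rw [hprior, exp_neg_sq_add_mul]
    ring
  have hN : Nint φ n σ θ₀ ε = exp (ε ^ 2 / 2) *
      ((fun v => v ^ 2 * rescale φ (√n * σ) (θ₀ / σ) v) ⋆ gaussKernel) ε := by
    rw [Nint, convolution_gaussKernel_apply, ← integral_const_mul]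
    congr 1 with v
    rw [hprior, exp_neg_sq_add_mul]
    ring
  rw [Bpost, hD, hN, postSecondMoment, mul_left_comm, mul_div_mul_left _ _ (exp_pos _).ne',
    div_div, mul_comm (n : ℝ)]

theorem second_moment_min_bound_general (φ : ℝ → ℝ) (cφ Cφ τ M : ℝ)
    (hφ_meas : Measurable φ) (hφ_nonneg : ∀ x, 0 ≤ φ x)
    (hφ_prob : (∫ x : ℝ, φ x) = 1)
    (hc : 0 < cφ)
    (hub : ∀ x : ℝ, φ x ≤ Cφ)
    (hlb : ∀ x ∈ Set.Ioo (-τ) τ, cφ ≤ φ x)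
    (hmom : Integrable (fun x : ℝ => x ^ 2 * φ x))
    (hτ : M + 1 ≤ τ) :
    ∃ C : ℝ, ∀ n : ℕ, 1 ≤ n → ∀ σ : ℝ, 0 < σ →
      ∀ θ₀ : ℝ, |θ₀| ≤ M * σ →
        (∫ ε, Bpost φ n σ θ₀ ε ∂(gaussianReal 0 1)) ≤ C * min (σ ^ 2) (1 / n) := by
  set C := exp (1 / 2) * (4 * √(2 * π) * Cφ + 9 * (2 * ((∫ x, x ^ 2 * φ x) + M ^ 2))) / cφ
  refine ⟨C, fun n hn σ hσ θ₀ hθ => ?_⟩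
  have hn' : (0 : ℝ) < n := by exact_mod_cast hn
  have hs : 0 < √n * σ := by positivity
  have hθσ : |θ₀ / σ| ≤ M := by rwa [abs_div, abs_of_pos hσ, div_le_iff₀ hσ]
  have hφ_int : Integrable φ := .of_integral_ne_zero (by rw [hφ_prob]; exact one_ne_zero)
  have hg := densityBoundsAtScale_rescale hφ_meas hφ_nonneg hub hlb hs (c := θ₀ / σ)
    (by linarith)
  have hmom' := integrable_sq_mul_rescale hs (c := θ₀ / σ)
    (integrable_sub_sq_mul hφ_meas hφ_nonneg hφ_int hmom _)
  calc ∫ ε, Bpost φ n σ θ₀ ε ∂gaussianReal 0 1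
      = (∫ ε, postSecondMoment (rescale φ (√n * σ) (θ₀ / σ)) ε ∂gaussianReal 0 1) / n := by
        simp_rw [Bpost_eq]
        exact integral_div _ _
    _ ≤ C * min ((√n * σ) ^ 2) 1 / n := by
        gcongr
        exact hg.integral_postSecondMoment_le_min hc hs hmom'
          (integral_sq_mul_rescale_le hφ_meas hφ_nonneg hφ_prob hmom hs hθσ)
    _ = C * min (σ ^ 2) (1 / n) := by
        rw [mul_div_assoc, ← min_div_div_right hn'.le, mul_pow, sq_sqrt hn'.le,
          mul_div_cancel_left₀ _ hn'.ne']

theorem second_moment_min_bound (φ : ℝ → ℝ) (cφ Cφ τ M : ℝ)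
    (hφ_meas : Measurable φ) (hφ_nonneg : ∀ x, 0 ≤ φ x)
    (hφ_prob : (∫ x : ℝ, φ x) = 1)
    (hc : 0 < cφ) (hcC : cφ ≤ Cφ)
    (hub : ∀ x : ℝ, φ x ≤ Cφ)
    (hlb : ∀ x ∈ Set.Ioo (-τ) τ, cφ ≤ φ x)
    (hmom : Integrable (fun x : ℝ => x ^ 2 * φ x))
    (hM : 0 < M) (hτ : M + 1 ≤ τ) :
    ∃ C : ℝ, ∀ n : ℕ, 1 ≤ n → ∀ σ : ℝ, 0 < σ →
      ∀ θ₀ : ℝ, |θ₀| ≤ M * σ →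
        (∫ ε, Bpost φ n σ θ₀ ε ∂(gaussianReal 0 1)) ≤ C * min (σ ^ 2) (1 / n) :=
  second_moment_min_bound_general φ cφ Cφ τ M hφ_meas hφ_nonneg hφ_prob hc hub hlb hmom hτ
end

section
/- If √n σ ≥ S₀ and |θ₀| ≤ Mσ, then there exists L₀ > 0, depending only on S₀, M and τ (for instance L₀ = S₀(τ−M)/2), such that for every ε ∈ ℝ the posterior second moment satisfies n·B_{n,σ,θ₀}(ε) ≤ (C_φ/c_φ) · ( ∫_ℝ v² exp(−v²/2 + εv) dv ) / ( ∫_{−L₀}^{L₀} exp(−v²/2 + εv) dv ). -/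
open MeasureTheory ProbabilityTheory

/-!
Bound the prior weight `v ↦ (√n σ)⁻¹ φ((θ₀ + v/√n)/σ)` above by `(√n σ)⁻¹ C_φ` in the numerator,
and below by `(√n σ)⁻¹ c_φ` on `[-L₀, L₀]` in the denominator: for `|v| ≤ L₀ = S₀(τ - M)/2` the
argument of `φ` stays in `(-τ, τ)` because `√n σ ≥ S₀` and `|θ₀| ≤ Mσ`. The factors `(√n σ)⁻¹`
cancel, and the Gaussian integrals involved are finite and positive.
-/

open Set

lemma integrable_exp_neg_mul_sq_add_mul {b : ℝ} (hb : 0 < b) (c : ℝ) :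
    Integrable fun x : ℝ => Real.exp (-b * x ^ 2 + c * x) := by
  have h := (integrable_cexp_quadratic (b := b) (by simpa using hb) c 0).norm
  refine h.congr (Filter.Eventually.of_forall fun x => ?_)
  simp only [Complex.norm_exp, add_zero]
  norm_cast

lemma integrable_sq_mul_exp_neg_mul_sq_add_mul {b : ℝ} (hb : 0 < b) (c : ℝ) :
    Integrable fun x : ℝ => x ^ 2 * Real.exp (-b * x ^ 2 + c * x) := by
  -- half of the Gaussian factor absorbs `x ^ 2`, since `y ≤ exp y`
  have hbound : ∀ x : ℝ, ‖x ^ 2 * Real.exp (-(b / 2) * x ^ 2)‖ ≤ 2 / b := fun x => by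
    have hy := Real.add_one_le_exp (b / 2 * x ^ 2)
    rw [Real.norm_of_nonneg (by positivity), neg_mul, Real.exp_neg, ← div_eq_mul_inv,
      div_le_div_iff₀ (Real.exp_pos _) hb]
    linarith
  have h := (integrable_exp_neg_mul_sq_add_mul (half_pos hb) c).bdd_mul
    (by fun_prop) (Filter.Eventually.of_forall hbound)
  refine h.congr (Filter.Eventually.of_forall fun x => ?_)
  simp only [mul_assoc, ← Real.exp_add]
  ring_nf

lemma integral_Icc_pos_of_pos {f : ℝ → ℝ} {a b : ℝ} (hf : IntegrableOn f (Icc a b))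
    (hpos : ∀ x, 0 < f x) (hab : a < b) : 0 < ∫ x in Icc a b, f x := by
  rw [integral_Icc_eq_integral_Ioc, ← intervalIntegral.integral_of_le hab.le]
  exact intervalIntegral.intervalIntegral_pos_of_pos
    ((intervalIntegrable_iff_integrableOn_Icc_of_le hab.le).2 hf) hpos hab

lemma integral_mul_div_integral_mul_le {α : Type*} [MeasurableSpace α] {μ : Measure α}
    {f g w : α → ℝ} {s : Set α} {l U : ℝ} (hs : MeasurableSet s)
    (hf : Integrable f μ) (hg : Integrable g μ) (hf0 : 0 ≤ f) (hg0 : 0 ≤ g)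
    (hw : AEStronglyMeasurable w μ) (hw0 : 0 ≤ w) (hwU : ∀ x, w x ≤ U)
    (hwl : ∀ x ∈ s, l ≤ w x) (hl : 0 < l) (hfs : 0 < ∫ x in s, f x ∂μ) :
    (∫ x, g x * w x ∂μ) / (∫ x, f x * w x ∂μ) ≤ U / l * ((∫ x, g x ∂μ) / ∫ x in s, f x ∂μ) := by
  have hw_bdd : ∀ᵐ x ∂μ, ‖w x‖ ≤ U := Filter.Eventually.of_forall fun x => by
    rw [Real.norm_of_nonneg (hw0 x)]; exact hwU x
  have hfw : Integrable (fun x => f x * w x) μ := by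
    simpa only [mul_comm] using hf.bdd_mul hw hw_bdd
  have hgw : Integrable (fun x => g x * w x) μ := by
    simpa only [mul_comm] using hg.bdd_mul hw hw_bdd
  have hnum : ∫ x, g x * w x ∂μ ≤ U * ∫ x, g x ∂μ := by
    rw [← integral_const_mul]
    refine integral_mono hgw (hg.const_mul U) fun x => ?_
    simpa only [mul_comm U] using mul_le_mul_of_nonneg_left (hwU x) (hg0 x)
  have hden : l * ∫ x in s, f x ∂μ ≤ ∫ x, f x * w x ∂μ := calc
    l * ∫ x in s, f x ∂μ = ∫ x in s, f x * l ∂μ := by rw [integral_mul_const, mul_comm]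
    _ ≤ ∫ x in s, f x * w x ∂μ :=
      setIntegral_mono_on (hf.integrableOn.mul_const l) hfw.integrableOn hs
        fun x hx => mul_le_mul_of_nonneg_left (hwl x hx) (hf0 x)
    _ ≤ ∫ x, f x * w x ∂μ :=
      setIntegral_le_integral hfw (Filter.Eventually.of_forall fun x => mul_nonneg (hf0 x) (hw0 x))
  have hgw0 : 0 ≤ ∫ x, g x * w x ∂μ := integral_nonneg fun x => mul_nonneg (hg0 x) (hw0 x)
  calc (∫ x, g x * w x ∂μ) / (∫ x, f x * w x ∂μ)
      ≤ (U * ∫ x, g x ∂μ) / (l * ∫ x in s, f x ∂μ) :=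
        div_le_div₀ (hgw0.trans hnum) hnum (by positivity) hden
    _ = U / l * ((∫ x, g x ∂μ) / ∫ x in s, f x ∂μ) := by rw [mul_div_mul_comm]

lemma abs_add_div_div_lt {a σ θ v S M τ : ℝ} (ha : 0 < a) (hσ : 0 < σ) (hS : S ≤ a * σ)
    (hθ : |θ| ≤ M * σ) (hMτ : M < τ) (hv : |v| ≤ S * (τ - M) / 2) :
    |(θ + v / a) / σ| < τ := by
  have hva : |v / a| ≤ (τ - M) / 2 * σ := by
    rw [abs_div, abs_of_pos ha, div_le_iff₀ ha]
    nlinarith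
  rw [abs_div, abs_of_pos hσ, div_lt_iff₀ hσ]
  calc |θ + v / a| ≤ |θ| + |v / a| := abs_add_le _ _
    _ < τ * σ := by nlinarith

lemma natCast_mul_Bpost (φ : ℝ → ℝ) {n : ℕ} (hn : n ≠ 0) (σ θ₀ ε : ℝ) :
    n * Bpost φ n σ θ₀ ε = Nint φ n σ θ₀ ε / Dint φ n σ θ₀ ε := by
  rw [Bpost, mul_div_assoc', mul_div_mul_left _ _ (Nat.cast_ne_zero.2 hn)]

theorem ratio_bound_large_sigma_general (φ : ℝ → ℝ) (cφ Cφ τ M S₀ : ℝ)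
    (hφ_meas : Measurable φ) (hφ_nonneg : ∀ x, 0 ≤ φ x)
    (hc : 0 < cφ)
    (hub : ∀ x : ℝ, φ x ≤ Cφ)
    (hlb : ∀ x ∈ Set.Ioo (-τ) τ, cφ ≤ φ x)
    (hMτ : M < τ) (hS : 0 < S₀) :
    ∃ L₀ : ℝ, 0 < L₀ ∧
      ∀ n : ℕ, 1 ≤ n → ∀ σ : ℝ, 0 < σ → S₀ ≤ Real.sqrt n * σ →
        ∀ θ₀ : ℝ, |θ₀| ≤ M * σ → ∀ ε : ℝ,
          (n : ℝ) * Bpost φ n σ θ₀ ε ≤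
            Cφ / cφ * ((∫ v : ℝ, v ^ 2 * Real.exp (-v ^ 2 / 2 + ε * v)) /
              (∫ v in Set.Icc (-L₀) L₀, Real.exp (-v ^ 2 / 2 + ε * v))) := by
  have hL₀ : 0 < S₀ * (τ - M) / 2 := by have := sub_pos.2 hMτ; positivity
  refine ⟨S₀ * (τ - M) / 2, hL₀, fun n hn σ hσ hsS θ₀ hθ ε => ?_⟩
  have hsqrt : 0 < Real.sqrt n := Real.sqrt_pos.2 (by exact_mod_cast hn)
  have hs : 0 < (Real.sqrt n * σ)⁻¹ := inv_pos.2 (hS.trans_le hsS)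
  have hgauss : Integrable fun v : ℝ => Real.exp (-v ^ 2 / 2 + ε * v) :=
    (integrable_exp_neg_mul_sq_add_mul one_half_pos ε).congr
      (Filter.Eventually.of_forall fun v => by ring_nf)
  have hgauss₂ : Integrable fun v : ℝ => v ^ 2 * Real.exp (-v ^ 2 / 2 + ε * v) :=
    (integrable_sq_mul_exp_neg_mul_sq_add_mul one_half_pos ε).congr
      (Filter.Eventually.of_forall fun v => by ring_nf)
  have harg : ∀ v ∈ Icc (-(S₀ * (τ - M) / 2)) (S₀ * (τ - M) / 2),
      (θ₀ + v / Real.sqrt n) / σ ∈ Ioo (-τ) τ := fun v hv =>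
    abs_lt.1 (abs_add_div_div_lt hsqrt hσ hsS hθ hMτ (abs_le.2 hv))
  rw [natCast_mul_Bpost φ (by omega), ← mul_div_mul_left Cφ cφ hs.ne']
  refine integral_mul_div_integral_mul_le measurableSet_Icc hgauss hgauss₂
    (fun v => (Real.exp_pos _).le) (fun v => by positivity)
    ((hφ_meas.comp (by fun_prop)).const_mul _).aestronglyMeasurable
    (fun v => mul_nonneg hs.le (hφ_nonneg _)) (fun v => by gcongr; exact hub _)
    (fun v hv => by gcongr; exact hlb _ (harg v hv)) (mul_pos hs hc)
    (integral_Icc_pos_of_pos hgauss.integrableOn (fun v => Real.exp_pos _) (by linarith))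

theorem ratio_bound_large_sigma (φ : ℝ → ℝ) (cφ Cφ τ M S₀ : ℝ)
    (hφ_meas : Measurable φ) (hφ_nonneg : ∀ x, 0 ≤ φ x)
    (hφ_prob : (∫ x : ℝ, φ x) = 1)
    (hc : 0 < cφ) (hcC : cφ ≤ Cφ)
    (hub : ∀ x : ℝ, φ x ≤ Cφ)
    (hlb : ∀ x ∈ Set.Ioo (-τ) τ, cφ ≤ φ x)
    (hmom : Integrable (fun x : ℝ => x ^ 2 * φ x))
    (hM : 0 < M) (hMτ : M < τ) (hS : 0 < S₀) :
    ∃ L₀ : ℝ, 0 < L₀ ∧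
      ∀ n : ℕ, 1 ≤ n → ∀ σ : ℝ, 0 < σ → S₀ ≤ Real.sqrt n * σ →
        ∀ θ₀ : ℝ, |θ₀| ≤ M * σ → ∀ ε : ℝ,
          (n : ℝ) * Bpost φ n σ θ₀ ε ≤
            Cφ / cφ * ((∫ v : ℝ, v ^ 2 * Real.exp (-v ^ 2 / 2 + ε * v)) /
              (∫ v in Set.Icc (-L₀) L₀, Real.exp (-v ^ 2 / 2 + ε * v))) :=
  ratio_bound_large_sigma_general φ cφ Cφ τ M S₀ hφ_meas hφ_nonneg hc hub hlb hMτ hS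
end

section
/- For every L₀ > 0, the quantity Q(L₀) = E[ ( ∫_ℝ v² exp(−(v−ε)²/2) dv ) / ( ∫_{−L₀}^{L₀} exp(−(v−ε)²/2) dv ) ] is finite, where the expectation is over ε ~ N(0,1). -/
/-!
The numerator equals `√(2π) (1 + ε²)`: up to normalisation it is the second moment of `N(ε, 1)`.
On the half of `[-L₀, L₀]` where `v ε ≥ L₀ |ε| / 2`, the integrand of the denominator is at least
`exp (-(L₀² + ε²) / 2 + L₀ |ε| / 2)`. Against the standard Gaussian density the factor
`exp (-ε² / 2)` cancels, so the integrand is `O((1 + ε²) exp (-L₀ |ε| / 2))`.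
-/

open MeasureTheory ProbabilityTheory Real Set

lemma integrable_comp_abs_of_integrableOn_Ioi {f : ℝ → ℝ} (hf : IntegrableOn f (Ioi 0)) :
    Integrable fun x => f |x| := by
  have hpos : IntegrableOn (fun x => f |x|) (Ioi 0) :=
    hf.congr_fun (fun x hx => by rw [abs_of_pos hx]) measurableSet_Ioi
  have hneg : IntegrableOn (fun x => f |x|) (Iio 0) := by
    rw [← (Measure.measurePreserving_neg (volume : Measure ℝ)).integrableOn_comp_preimage
      (Homeomorph.neg ℝ).measurableEmbedding]
    simpa only [Function.comp_def, abs_neg, neg_preimage, neg_Iio, neg_zero] using hpos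
  rw [← integrableOn_univ, ← Iio_union_Ici (a := (0 : ℝ)), integrableOn_union,
    integrableOn_Ici_iff_integrableOn_Ioi]
  exact ⟨hneg, hpos⟩

lemma integrable_one_add_sq_mul_exp_neg_mul_abs {b : ℝ} (hb : 0 < b) :
    Integrable fun x : ℝ => (1 + x ^ 2) * exp (-b * |x|) := by
  have hpow : ∀ s : ℝ, -1 < s → IntegrableOn (fun x : ℝ => x ^ s * exp (-b * x)) (Ioi 0) := by
    intro s hs
    simpa using integrableOn_rpow_mul_exp_neg_mul_rpow hs one_pos hb
  refine (integrable_comp_abs_of_integrableOn_Ioi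
    ((hpow 0 (by norm_num)).add (hpow 2 (by norm_num)))).congr (ae_of_all _ fun x => ?_)
  simp [add_mul]

lemma integrable_gaussianReal_iff {f : ℝ → ℝ} {μ : ℝ} {v : NNReal} (hv : v ≠ 0) :
    Integrable f (gaussianReal μ v) ↔ Integrable fun x => gaussianPDFReal μ v x * f x := by
  rw [gaussianReal_of_var_ne_zero _ hv, integrable_withDensity_iff_integrable_smul'
    (measurable_gaussianPDF _ _) (ae_of_all _ fun _ => gaussianPDF_lt_top)]
  simp [gaussianPDF, ENNReal.toReal_ofReal (gaussianPDFReal_nonneg _ _ _)]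

lemma integral_mul_exp_neg_sq_sub_div_two (f : ℝ → ℝ) (μ : ℝ) :
    ∫ v, f v * exp (-(v - μ) ^ 2 / 2) = √(2 * π) * ∫ v, f v ∂gaussianReal μ 1 := by
  rw [integral_gaussianReal_eq_integral_smul one_ne_zero, ← integral_const_mul]
  congr 1 with v
  simp only [gaussianPDFReal, NNReal.coe_one, mul_one, smul_eq_mul]
  field_simp

lemma integral_sq_gaussianReal (μ : ℝ) (v : NNReal) :
    ∫ x, x ^ 2 ∂gaussianReal μ v = v + μ ^ 2 := by
  have hvar := variance_eq_sub (memLp_id_gaussianReal (μ := μ) (v := v) 2)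
  simp only [variance_id_gaussianReal, Pi.pow_apply, id_eq, integral_id_gaussianReal] at hvar
  linarith

lemma mul_le_setIntegral_Icc_of_le {f : ℝ → ℝ} {a b c d m : ℝ} (hf : ContinuousOn f (Icc a b))
    (hf₀ : ∀ x ∈ Icc a b, 0 ≤ f x) (hcd : c ≤ d) (hsub : Icc c d ⊆ Icc a b)
    (hm : ∀ x ∈ Icc c d, m ≤ f x) :
    (d - c) * m ≤ ∫ x in Icc a b, f x := by
  have hint : IntegrableOn f (Icc a b) := hf.integrableOn_Icc
  calc (d - c) * m = ∫ _ in Icc c d, m := by simp [measureReal_def, Real.volume_Icc, hcd]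
    _ ≤ ∫ x in Icc c d, f x :=
      setIntegral_mono_on (integrableOn_const measure_Icc_lt_top.ne) (hint.mono_set hsub)
        measurableSet_Icc hm
    _ ≤ ∫ x in Icc a b, f x :=
      setIntegral_mono_set hint ((ae_restrict_iff' measurableSet_Icc).2 (ae_of_all _ hf₀))
        hsub.eventuallyLE

lemma le_setIntegral_Icc_exp_neg_sq_sub {L : ℝ} (hL : 0 < L) (ε : ℝ) :
    L / 2 * exp (-(L ^ 2 + ε ^ 2) / 2 + L * |ε| / 2) ≤
      ∫ v in Icc (-L) L, exp (-(v - ε) ^ 2 / 2) := by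
  have hexp : ∀ v ∈ Icc (-L) L, L * |ε| / 2 ≤ v * ε →
      exp (-(L ^ 2 + ε ^ 2) / 2 + L * |ε| / 2) ≤ exp (-(v - ε) ^ 2 / 2) := by
    intro v hv hvε
    have : v ^ 2 ≤ L ^ 2 := sq_le_sq' hv.1 hv.2
    exact exp_le_exp.2 (by nlinarith)
  have hcont : ContinuousOn (fun v => exp (-(v - ε) ^ 2 / 2)) (Icc (-L) L) := by fun_prop
  have hpos : ∀ v ∈ Icc (-L) L, 0 ≤ exp (-(v - ε) ^ 2 / 2) := fun _ _ => (exp_pos _).le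
  rcases le_or_gt 0 ε with hε | hε
  · convert mul_le_setIntegral_Icc_of_le hcont hpos (by linarith : L / 2 ≤ L)
      (Icc_subset_Icc (by linarith) le_rfl)
      (fun v hv => hexp v ⟨by linarith [hv.1], hv.2⟩ ?_) using 2
    · ring
    · rw [abs_of_nonneg hε]; nlinarith [hv.1]
  · convert mul_le_setIntegral_Icc_of_le hcont hpos (by linarith : -L ≤ -(L / 2))
      (Icc_subset_Icc le_rfl (by linarith))
      (fun v hv => hexp v ⟨hv.1, by linarith [hv.2]⟩ ?_) using 2
    · ring
    · rw [abs_of_neg hε]; nlinarith [hv.2]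

lemma norm_gaussianPDFReal_mul_div_le {L ε d : ℝ} (hL : 0 < L)
    (hd : L / 2 * exp (-(L ^ 2 + ε ^ 2) / 2 + L * |ε| / 2) ≤ d) :
    ‖gaussianPDFReal 0 1 ε * (√(2 * π) * (1 + ε ^ 2) / d)‖ ≤
      2 / L * exp (L ^ 2 / 2) * ((1 + ε ^ 2) * exp (-(L / 2) * |ε|)) := by
  have hpdf : gaussianPDFReal 0 1 ε * √(2 * π) = exp (-ε ^ 2 / 2) := by
    simp only [gaussianPDFReal, NNReal.coe_one, mul_one, sub_zero]
    field_simp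
  have hexp : exp (-ε ^ 2 / 2) = exp (-(L ^ 2 + ε ^ 2) / 2 + L * |ε| / 2) *
      (exp (L ^ 2 / 2) * exp (-(L / 2) * |ε|)) := by
    rw [← exp_add, ← exp_add]; ring_nf
  have hd₀ : 0 < d := lt_of_lt_of_le (by positivity) hd
  rw [norm_of_nonneg (mul_nonneg (gaussianPDFReal_nonneg _ _ _) (by positivity))]
  calc gaussianPDFReal 0 1 ε * (√(2 * π) * (1 + ε ^ 2) / d)
      = (1 + ε ^ 2) * exp (-ε ^ 2 / 2) / d := by rw [← hpdf]; ring
    _ ≤ (1 + ε ^ 2) * exp (-ε ^ 2 / 2) / (L / 2 * exp (-(L ^ 2 + ε ^ 2) / 2 + L * |ε| / 2)) :=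
      div_le_div_of_nonneg_left (by positivity) (by positivity) hd
    _ = 2 / L * exp (L ^ 2 / 2) * ((1 + ε ^ 2) * exp (-(L / 2) * |ε|)) := by
      rw [hexp]; field_simp

theorem Q_finite (L₀ : ℝ) (hL₀ : 0 < L₀) :
    Integrable (fun ε : ℝ =>
      (∫ v : ℝ, v ^ 2 * Real.exp (-(v - ε) ^ 2 / 2)) /
        (∫ v in Set.Icc (-L₀) L₀, Real.exp (-(v - ε) ^ 2 / 2)))
      (gaussianReal 0 1) := by
  have hnum : ∀ ε : ℝ, ∫ v, v ^ 2 * exp (-(v - ε) ^ 2 / 2) = √(2 * π) * (1 + ε ^ 2) := by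
    intro ε
    rw [integral_mul_exp_neg_sq_sub_div_two (· ^ 2), integral_sq_gaussianReal, NNReal.coe_one]
  have hden : Continuous fun ε : ℝ => ∫ v in Icc (-L₀) L₀, exp (-(v - ε) ^ 2 / 2) :=
    continuous_parametric_integral_of_continuous (by fun_prop) isCompact_Icc
  simp_rw [hnum]
  rw [integrable_gaussianReal_iff one_ne_zero]
  refine ((integrable_one_add_sq_mul_exp_neg_mul_abs (half_pos hL₀)).const_mul
    (2 / L₀ * exp (L₀ ^ 2 / 2))).mono' ?_ (ae_of_all _ fun ε => ?_)
  · exact ((measurable_gaussianPDFReal 0 1).mul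
      ((by fun_prop : Continuous fun ε : ℝ => √(2 * π) * (1 + ε ^ 2)).measurable.div
        hden.measurable)).aestronglyMeasurable
  · exact norm_gaussianPDFReal_mul_div_le hL₀ (le_setIntegral_Icc_exp_neg_sq_sub hL₀ ε)
end
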